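/- arXiv:1807.01732 — 4 statements merged into one kernel-verified Lean document; each statement's English description precedes it below -/
import Mathlib

section
/- Let (Ω, P) be a probability space, let W be an event with P(W) = q where 0 < q < 1, and let 0 < p_L < b < p_H ≤ 1. Set ε' = min(1/2, (1−q)·(b−p_L)/2). Let A be an event with P(A) > 0 such that P(A | W) ≤ ε' and P(A | Wᶜ) ≥ 1 − ε'. Then P(W | A)·p_H + P(Wᶜ | A)·p_L < b. -/
/-!
Write `a = P(W ∩ A)` and `c = P(Wᶜ ∩ A)`. The posterior expectation `(a p_H + c p_L) / (a + c)`
is below `b` exactly when `a (p_H - b) < c (b - p_L)`. The likelihood bounds give `a ≤ ε' q` and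
`c ≥ (1 - ε')(1 - q) ≥ (1 - q) / 2`, so `c (b - p_L) ≥ ε' > ε' q (p_H - b) ≥ a (p_H - b)`, the strict
step because `q < 1` and `p_H - b < 1`.
-/

open MeasureTheory ProbabilityTheory

namespace ProbabilityTheory

variable {Ω : Type*} [MeasurableSpace Ω] {μ : Measure Ω} {s t : Set Ω}

lemma toReal_cond_eq_div (ht : MeasurableSet t) :
    (μ[t | s]).toReal = μ.real (s ∩ t) / μ.real s := by
  rw [cond_apply' ht, ENNReal.toReal_mul, ENNReal.toReal_inv, div_eq_inv_mul]
  rfl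

lemma measureReal_inter_eq_toReal_cond_mul [IsFiniteMeasure μ] (hs : MeasurableSet s) :
    μ.real (s ∩ t) = (μ[t | s]).toReal * μ.real s := by
  rw [measureReal_def, ← cond_mul_eq_inter hs, ENNReal.toReal_mul]
  rfl

lemma measureReal_inter_le_of_cond_le [IsFiniteMeasure μ] {c : ℝ} (hs : MeasurableSet s)
    (hc : 0 ≤ c) (h : μ[t | s] ≤ ENNReal.ofReal c) : μ.real (s ∩ t) ≤ c * μ.real s := by
  rw [measureReal_inter_eq_toReal_cond_mul hs]
  gcongr
  exact ENNReal.toReal_le_of_le_ofReal hc h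

lemma le_measureReal_inter_of_le_cond [IsFiniteMeasure μ] {c : ℝ} (hs : MeasurableSet s)
    (h : ENNReal.ofReal c ≤ μ[t | s]) : c * μ.real s ≤ μ.real (s ∩ t) := by
  rw [measureReal_inter_eq_toReal_cond_mul hs]
  gcongr
  exact (ENNReal.ofReal_le_iff_le_toReal (measure_ne_top _ _)).1 h

lemma toReal_cond_mul_add_toReal_cond_compl_mul_lt [IsFiniteMeasure μ] {u v b : ℝ}
    (ht : MeasurableSet t) (hs : 0 < μ s)
    (h : μ.real (s ∩ t) * (u - b) < μ.real (s ∩ tᶜ) * (b - v)) :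
    (μ[t | s]).toReal * u + (μ[tᶜ | s]).toReal * v < b := by
  have hsum : μ.real (s ∩ t) + μ.real (s ∩ tᶜ) = μ.real s := by
    rw [← Set.sdiff_eq, measureReal_inter_add_sdiff ht]
  have hpos : 0 < μ.real s := ENNReal.toReal_pos hs.ne' (measure_ne_top μ s)
  rw [toReal_cond_eq_div ht, toReal_cond_eq_div ht.compl, div_mul_eq_mul_div, div_mul_eq_mul_div,
    ← add_div, div_lt_iff₀ hpos, ← hsum]
  linarith

end ProbabilityTheory

theorem stmt_3_general {Ω : Type*} [MeasurableSpace Ω] (μ : Measure Ω) [IsProbabilityMeasure μ]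
    (W A : Set Ω) (hW : MeasurableSet W)
    (q p_L p_H b : ℝ) (hq0 : 0 < q) (hq1 : q < 1)
    (hpL : 0 < p_L) (hpLb : p_L < b) (hbpH : b < p_H) (hpH : p_H ≤ 1)
    (hqW : μ W = ENNReal.ofReal q)
    (hApos : 0 < μ A)
    (hAW : μ[A | W] ≤ ENNReal.ofReal (min (1/2) ((1 - q) * (b - p_L) / 2)))
    (hAWc : ENNReal.ofReal (1 - min (1/2) ((1 - q) * (b - p_L) / 2)) ≤ μ[A | Wᶜ]) :
    (μ[W | A]).toReal * p_H + (μ[Wᶜ | A]).toReal * p_L < b := by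
  set ε := min (1/2) ((1 - q) * (b - p_L) / 2)
  have hε0 : 0 < ε := lt_min (by norm_num) (by nlinarith)
  have hεhalf : ε ≤ 1/2 := min_le_left _ _
  have hε : ε ≤ (1 - q) * (b - p_L) / 2 := min_le_right _ _
  have hμW : μ.real W = q := by rw [measureReal_def, hqW, ENNReal.toReal_ofReal hq0.le]
  have hμWc : μ.real Wᶜ = 1 - q := by rw [probReal_compl_eq_one_sub hW, hμW]
  have hWA : μ.real (W ∩ A) ≤ ε * q := hμW ▸ measureReal_inter_le_of_cond_le hW hε0.le hAW
  have hWcA : (1 - ε) * (1 - q) ≤ μ.real (Wᶜ ∩ A) :=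
    hμWc ▸ le_measureReal_inter_of_le_cond hW.compl hAWc
  refine toReal_cond_mul_add_toReal_cond_compl_mul_lt hW hApos ?_
  rw [Set.inter_comm A W, Set.inter_comm A Wᶜ]
  calc μ.real (W ∩ A) * (p_H - b) ≤ ε * q * (p_H - b) := by gcongr
    _ = ε * (q * (p_H - b)) := by ring
    _ < ε := mul_lt_of_lt_one_right hε0 (by nlinarith)
    _ ≤ (1 - ε) * (1 - q) * (b - p_L) := by nlinarith
    _ ≤ μ.real (Wᶜ ∩ A) * (b - p_L) := by gcongr

/-- Lemma 2 (posterior-expectation form): if `P(A|W) ≤ ε'` and `P(A|Wᶜ) ≥ 1 - ε'`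
with `ε' = min (1/2) ((1-q)(b - p_L)/2)`, then the posterior expected reward of the
risky arm conditional on `A` is strictly below the safe reward `b`. -/
theorem stmt_3 {Ω : Type*} [MeasurableSpace Ω] (μ : Measure Ω) [IsProbabilityMeasure μ]
    (W A : Set Ω) (hW : MeasurableSet W) (hA : MeasurableSet A)
    (q p_L p_H b : ℝ) (hq0 : 0 < q) (hq1 : q < 1)
    (hpL : 0 < p_L) (hpLb : p_L < b) (hbpH : b < p_H) (hpH : p_H ≤ 1)
    (hqW : μ W = ENNReal.ofReal q)
    (hApos : 0 < μ A)
    (hAW : μ[A | W] ≤ ENNReal.ofReal (min (1/2) ((1 - q) * (b - p_L) / 2)))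
    (hAWc : ENNReal.ofReal (1 - min (1/2) ((1 - q) * (b - p_L) / 2)) ≤ μ[A | Wᶜ]) :
    (μ[W | A]).toReal * p_H + (μ[Wᶜ | A]).toReal * p_L < b :=
  stmt_3_general μ W A hW q p_L p_H b hq0 hq1 hpL hpLb hbpH hpH hqW hApos hAW hAWc
end

section
/- Let 0 < p_H < 1, let K > 0 be an integer, and let β > 0. Define n' = [ (1−p_H)·(2K + 4K·p_H/β) + sqrt( ((1−p_H)·(2K + 4K·p_H/β))^2 − 4·(1−p_H)^2·K^2 ) ] / ( 2·(1−p_H)^2 ). Then for every integer n ≥ n', if Y is a binomial random variable with parameters n and 1−p_H, then P(Y < K) ≤ β/(4K). -/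
/-!
Write `q = 1 - p_H`, `x = n q` and `B = 2K + 4K p_H / β`. Since
`√(q²(B² - 4K²)) = q √(B² - 4K²)`, the hypothesis on `n` says that `x` lies beyond the
larger root of `x² - B x + K²`, so `x² - B x + K² ≥ 0` and `x > B / 2 > K`. Chebyshev's
inequality for the sum `Y`, with `E Y = x` and `Var Y = x p_H`, then bounds `P(Y < K)` by
`x p_H / (x - K)²`, and `β (x² - B x + K²) ≥ 0` is exactly `x p_H / (x - K)² ≤ β / (4K)`.
-/

open MeasureTheory ProbabilityTheory

lemma sq_sub_mul_add_nonneg_of_root_le {b c x : ℝ} (hd : 0 ≤ b ^ 2 - 4 * c)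
    (hx : (b + √(b ^ 2 - 4 * c)) / 2 ≤ x) : 0 ≤ x ^ 2 - b * x + c := by
  have hroot : √(b ^ 2 - 4 * c) ≤ 2 * x - b := by linarith
  have hsq := pow_le_pow_left₀ (Real.sqrt_nonneg _) hroot 2
  rw [Real.sq_sqrt hd] at hsq
  nlinarith

lemma half_le_of_root_le {b c x : ℝ} (hx : (b + √(b ^ 2 - 4 * c)) / 2 ≤ x) : b / 2 ≤ x := by
  linarith [Real.sqrt_nonneg (b ^ 2 - 4 * c)]

lemma root_le_mul_of_div_le {q b c x : ℝ} (hq : 0 < q)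
    (hx : (q * b + √((q * b) ^ 2 - 4 * q ^ 2 * c)) / (2 * q ^ 2) ≤ x) :
    (b + √(b ^ 2 - 4 * c)) / 2 ≤ x * q := by
  have hsqrt : √((q * b) ^ 2 - 4 * q ^ 2 * c) = q * √(b ^ 2 - 4 * c) := by
    rw [show (q * b) ^ 2 - 4 * q ^ 2 * c = q ^ 2 * (b ^ 2 - 4 * c) by ring,
      Real.sqrt_mul (sq_nonneg q), Real.sqrt_sq hq.le]
  rw [hsqrt, div_le_iff₀ (by positivity)] at hx
  rw [div_le_iff₀ two_pos]
  nlinarith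

lemma mul_div_sub_sq_le_of_quadratic_nonneg {K x p β : ℝ} (hβ : 0 < β) (hK : 0 < K)
    (hKx : K < x) (hquad : 0 ≤ x ^ 2 - (2 * K + 4 * K * p / β) * x + K ^ 2) :
    x * p / (x - K) ^ 2 ≤ β / (4 * K) := by
  rw [div_le_div_iff₀ (by nlinarith) (by positivity)]
  have hscaled := mul_nonneg hβ.le hquad
  field_simp at hscaled
  nlinarith

section Probability

variable {Ω : Type*} [MeasurableSpace Ω] {μ : Measure Ω}

lemma measure_lt_le_variance_div_sq [IsFiniteMeasure μ] {X : Ω → ℝ} (hX : MemLp X 2 μ)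
    {a : ℝ} (ha : a < μ[X]) :
    μ {ω | X ω < a} ≤ ENNReal.ofReal (variance X μ / (μ[X] - a) ^ 2) := by
  refine (measure_mono fun ω (hω : X ω < a) => ?_).trans
    (meas_ge_le_variance_div_sq hX (sub_pos.mpr ha))
  show μ[X] - a ≤ |X ω - μ[X]|
  rw [abs_sub_comm]
  exact (sub_le_sub_left hω.le _).trans (le_abs_self _)

variable {f : Ω → ℝ}

lemma memLp_of_forall_eq_zero_or_eq_one [IsFiniteMeasure μ] (hf : Measurable f)
    (h01 : ∀ ω, f ω = 0 ∨ f ω = 1) (p : ENNReal) : MemLp f p μ :=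
  MemLp.of_bound hf.aestronglyMeasurable 1
    (Filter.Eventually.of_forall fun ω => by rcases h01 ω with h | h <;> simp [h])

lemma integral_eq_measureReal_of_forall_eq_zero_or_eq_one (hf : Measurable f)
    (h01 : ∀ ω, f ω = 0 ∨ f ω = 1) : μ[f] = μ.real {ω | f ω = 1} := by
  have hindicator : f = {ω | f ω = 1}.indicator 1 := by
    funext ω
    rcases h01 ω with h | h <;> simp [Set.indicator, h]
  calc μ[f] = ∫ ω, {ω | f ω = 1}.indicator 1 ω ∂μ := by rw [← hindicator]
    _ = μ.real {ω | f ω = 1} := integral_indicator_one (hf (measurableSet_singleton 1))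

lemma variance_eq_of_forall_eq_zero_or_eq_one [IsProbabilityMeasure μ] (hf : Measurable f)
    (h01 : ∀ ω, f ω = 0 ∨ f ω = 1) : variance f μ = μ[f] * (1 - μ[f]) := by
  have hsq : f ^ 2 = f := by
    funext ω
    rcases h01 ω with h | h <;> simp [h]
  rw [variance_eq_sub (memLp_of_forall_eq_zero_or_eq_one hf h01 2), hsq]
  ring

lemma measure_sum_lt_le_of_forall_eq_zero_or_eq_one [IsProbabilityMeasure μ] {ι : Type*}
    [Fintype ι] {t : ι → Ω → ℝ} (hmeas : ∀ i, Measurable (t i)) (h01 : ∀ i ω, t i ω = 0 ∨ t i ω = 1) {q : ℝ}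
    (hmean : ∀ i, μ[t i] = q) (hind : Pairwise fun i j => IndepFun (t i) (t j) μ) {a : ℝ}
    (ha : a < Fintype.card ι * q) :
    μ {ω | ∑ i, t i ω < a} ≤
      ENNReal.ofReal (Fintype.card ι * (q * (1 - q)) / (Fintype.card ι * q - a) ^ 2) := by
  have hmemLp i : MemLp (t i) 2 μ := memLp_of_forall_eq_zero_or_eq_one (hmeas i) (h01 i) 2
  have hsum_mean : μ[∑ i, t i] = Fintype.card ι * q := by
    simp only [Finset.sum_apply]
    rw [integral_finsetSum _ fun i _ => (hmemLp i).integrable one_le_two]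
    simp [hmean]
  have hsum_var : variance (∑ i, t i) μ = Fintype.card ι * (q * (1 - q)) := by
    rw [IndepFun.variance_sum (fun i _ => hmemLp i) fun i _ j _ hij => hind hij]
    simp [variance_eq_of_forall_eq_zero_or_eq_one (hmeas _) (h01 _), hmean]
  have hcheb := measure_lt_le_variance_div_sq (memLp_finsetSum' _ fun i _ => hmemLp i)
    (hsum_mean ▸ ha)
  rw [hsum_mean, hsum_var] at hcheb
  simpa only [Finset.sum_apply] using hcheb

end Probability

/-- Lemma 7, part 1: for `n` at least the explicit threshold `n'`, a binomial
random variable `Y ~ B(n, 1 - p_H)` satisfies `P(Y < K) ≤ β/(4K)`. -/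
theorem stmt_12 {Ω : Type*} [MeasurableSpace Ω] (μ : Measure Ω) [IsProbabilityMeasure μ]
    (p_H β : ℝ) (hpH0 : 0 < p_H) (hpH1 : p_H < 1) (hβ : 0 < β)
    (K : ℕ) (hK : 0 < K)
    (n : ℕ)
    (hn : ((1 - p_H) * (2 * K + 4 * K * p_H / β) +
        Real.sqrt (((1 - p_H) * (2 * K + 4 * K * p_H / β)) ^ 2 -
          4 * (1 - p_H) ^ 2 * (K : ℝ) ^ 2)) / (2 * (1 - p_H) ^ 2) ≤ (n : ℝ))
    (t : Fin n → Ω → ℝ)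
    (hmeas : ∀ i, Measurable (t i))
    (h01 : ∀ i ω, t i ω = 0 ∨ t i ω = 1)
    (hbern : ∀ i, μ {ω | t i ω = 1} = ENNReal.ofReal (1 - p_H))
    (hind : iIndepFun t μ) :
    μ {ω | (∑ i, t i ω) < (K : ℝ)} ≤ ENNReal.ofReal (β / (4 * K)) := by
  have hq : 0 < 1 - p_H := by linarith
  have hK' : (0 : ℝ) < K := by exact_mod_cast hK
  have hmean i : μ[t i] = 1 - p_H := by
    rw [integral_eq_measureReal_of_forall_eq_zero_or_eq_one (hmeas i) (h01 i), measureReal_def,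
      hbern i, ENNReal.toReal_ofReal hq.le]
  set b : ℝ := 2 * K + 4 * K * p_H / β
  have hKb : 2 * K < b := by linarith [show 0 < 4 * K * p_H / β by positivity]
  have hroot := root_le_mul_of_div_le hq hn
  have hKx : (K : ℝ) < n * (1 - p_H) := by linarith [half_le_of_root_le hroot]
  have hquad := sq_sub_mul_add_nonneg_of_root_le (by nlinarith) hroot
  calc μ {ω | ∑ i, t i ω < K}
      ≤ ENNReal.ofReal (n * ((1 - p_H) * (1 - (1 - p_H))) / (n * (1 - p_H) - K) ^ 2) := by
        simpa using measure_sum_lt_le_of_forall_eq_zero_or_eq_one hmeas h01 hmean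
          (fun i j hij => hind.indepFun hij) (by simpa using hKx)
    _ ≤ ENNReal.ofReal (β / (4 * K)) := by
        refine ENNReal.ofReal_le_ofReal ?_
        rw [sub_sub_cancel, ← mul_assoc]
        exact mul_div_sub_sq_le_of_quadratic_nonneg hβ hK' hKx hquad
end

section
/- Let 0 < p_L < p_H < 1, let K > 0 be an integer, and let β > 0. Define n' = [ (1−p_H)·(2K + 4K·p_H/β) + sqrt( ((1−p_H)·(2K + 4K·p_H/β))^2 − 4·(1−p_H)^2·K^2 ) ] / ( 2·(1−p_H)^2 ). Then for every integer n ≥ n', if X is a binomial random variable with parameters n and 1−p_L, then P(X < K) ≤ β/(4K). -/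
/-!
Write `q = 1 - p_L`, `q_H = 1 - p_H` and `e = 4 K p_H / β`. The sum `X` of the indicators has
mean `n q` and variance `n q p_L ≤ n q p_H`, so Chebyshev gives `P(X < K) ≤ n q p_H / (n q - K)²`,
and it remains to show `e m ≤ (m - K)²` at `m = n q`.
The threshold `n'` is the larger root of `q_H² x² - q_H (2K + e) x + K²`, so `n ≥ n'` gives this
inequality at `m = n q_H`, together with `n q_H ≥ K + e / 2`. Beyond that point
`m ↦ (m - K)² - e m` is increasing, and `n q ≥ n q_H` because `p_L < p_H`.
-/

open MeasureTheory ProbabilityTheory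

section ZeroOne

variable {Ω : Type*} {X : Ω → ℝ}

lemma eq_indicator_of_zero_one (h01 : ∀ ω, X ω = 0 ∨ X ω = 1) :
    X = {ω | X ω = 1}.indicator 1 := by
  funext ω
  rcases h01 ω with h | h <;> simp [h]

lemma sq_eq_self_of_zero_one (h01 : ∀ ω, X ω = 0 ∨ X ω = 1) : X ^ 2 = X := by
  funext ω
  rcases h01 ω with h | h <;> simp [h]

variable [MeasurableSpace Ω] {μ : Measure Ω}

lemma integral_eq_measureReal_of_zero_one (hX : Measurable X)
    (h01 : ∀ ω, X ω = 0 ∨ X ω = 1) : μ[X] = μ.real {ω | X ω = 1} := by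
  conv_lhs => rw [eq_indicator_of_zero_one h01]
  exact integral_indicator_one (hX (measurableSet_singleton 1))

lemma memLp_of_zero_one [IsFiniteMeasure μ] (hX : Measurable X)
    (h01 : ∀ ω, X ω = 0 ∨ X ω = 1) (p : ENNReal) : MemLp X p μ :=
  memLp_of_bounded (a := 0) (b := 1)
    (ae_of_all _ fun ω => by rcases h01 ω with h | h <;> simp [h]) hX.aestronglyMeasurable p

lemma variance_eq_of_zero_one [IsProbabilityMeasure μ] (hX : Measurable X)
    (h01 : ∀ ω, X ω = 0 ∨ X ω = 1) :
    variance X μ = μ.real {ω | X ω = 1} * (1 - μ.real {ω | X ω = 1}) := by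
  rw [variance_eq_sub (memLp_of_zero_one hX h01 2), sq_eq_self_of_zero_one h01,
    integral_eq_measureReal_of_zero_one hX h01]
  ring

end ZeroOne

section Chebyshev

variable {Ω : Type*} [MeasurableSpace Ω] {μ : Measure Ω}

lemma meas_lt_le_variance_div_sq [IsFiniteMeasure μ] {X : Ω → ℝ} (hX : MemLp X 2 μ) {K : ℝ}
    (hK : K < μ[X]) :
    μ {ω | X ω < K} ≤ ENNReal.ofReal (variance X μ / (μ[X] - K) ^ 2) := by
  refine (measure_mono fun ω (hω : X ω < K) => ?_).trans
    (meas_ge_le_variance_div_sq hX (sub_pos.2 hK))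
  change μ[X] - K ≤ |X ω - μ[X]|
  rw [abs_sub_comm]
  exact (by linarith : μ[X] - K ≤ μ[X] - X ω).trans (le_abs_self _)

lemma meas_sum_lt_le_of_zero_one {ι : Type*} [Fintype ι] [IsProbabilityMeasure μ]
    {t : ι → Ω → ℝ} {q K : ℝ} (hmeas : ∀ i, Measurable (t i))
    (h01 : ∀ i ω, t i ω = 0 ∨ t i ω = 1) (hq : ∀ i, μ.real {ω | t i ω = 1} = q)
    (hind : Pairwise fun i j => IndepFun (t i) (t j) μ) (hK : K < Fintype.card ι * q) :
    μ {ω | ∑ i, t i ω < K} ≤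
      ENNReal.ofReal (Fintype.card ι * q * (1 - q) / (Fintype.card ι * q - K) ^ 2) := by
  have hmem : ∀ i, MemLp (t i) 2 μ := fun i => memLp_of_zero_one (hmeas i) (h01 i) 2
  have hmean : μ[∑ i, t i] = Fintype.card ι * q := by
    simp only [Finset.sum_apply]
    rw [integral_finsetSum _ fun i _ => (hmem i).integrable one_le_two]
    simp [integral_eq_measureReal_of_zero_one (hmeas _) (h01 _), hq]
  have hvar : variance (∑ i, t i) μ = Fintype.card ι * q * (1 - q) := by
    rw [IndepFun.variance_sum (fun i _ => hmem i) fun i _ j _ hij => hind hij]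
    simp [variance_eq_of_zero_one (hmeas _) (h01 _), hq, mul_assoc]
  have := meas_lt_le_variance_div_sq (memLp_finsetSum' _ fun i _ => hmem i) (hmean ▸ hK)
  rw [hmean, hvar] at this
  simpa only [Finset.sum_apply] using this

end Chebyshev

lemma mul_le_quadratic_of_root_le {A B C x : ℝ} (hA : 0 < A) (hD : 0 ≤ B ^ 2 - 4 * A * C)
    (hx : (B + √(B ^ 2 - 4 * A * C)) / (2 * A) ≤ x) : B * x ≤ A * x ^ 2 + C := by
  rw [div_le_iff₀ (by positivity)] at hx
  have hs := Real.sq_sqrt hD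
  have hs0 := Real.sqrt_nonneg (B ^ 2 - 4 * A * C)
  nlinarith [mul_self_le_mul_self hs0 (by linarith : √(B ^ 2 - 4 * A * C) ≤ x * (2 * A) - B)]

lemma mul_le_sq_sub_of_le {K e m₀ m : ℝ} (hvertex : K + e / 2 ≤ m₀) (hm : m₀ ≤ m)
    (h₀ : e * m₀ ≤ (m₀ - K) ^ 2) : e * m ≤ (m - K) ^ 2 := by
  nlinarith [mul_nonneg (sub_nonneg.2 hm) (by linarith : 0 ≤ m + m₀ - 2 * K - e)]

lemma lt_mul_and_div_sq_le_of_threshold_le {p β K n q : ℝ} (hp : 0 < p) (hp1 : p < 1)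
    (hβ : 0 < β) (hK : 0 < K) (hq : 1 - p ≤ q)
    (hn : ((1 - p) * (2 * K + 4 * K * p / β) +
        √(((1 - p) * (2 * K + 4 * K * p / β)) ^ 2 - 4 * (1 - p) ^ 2 * K ^ 2)) /
        (2 * (1 - p) ^ 2) ≤ n) :
    K < n * q ∧ n * q * p / (n * q - K) ^ 2 ≤ β / (4 * K) := by
  set a := 1 - p
  set e := 4 * K * p / β with he
  have ha : 0 < a := sub_pos.2 hp1
  have he0 : 0 < e := by positivity
  have hD : 0 ≤ (a * (2 * K + e)) ^ 2 - 4 * a ^ 2 * K ^ 2 := by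
    nlinarith [mul_pos (mul_pos ha ha) (mul_pos he0 (by linarith : 0 < 4 * K + e))]
  have hquad := mul_le_quadratic_of_root_le (by positivity) hD hn
  have hvertex : K + e / 2 ≤ n * a := by
    have := (div_le_div_of_nonneg_right (le_add_of_nonneg_right (Real.sqrt_nonneg _))
      (by positivity)).trans hn
    rw [div_le_iff₀ (by positivity)] at this
    nlinarith
  have hnq : n * a ≤ n * q :=
    mul_le_mul_of_nonneg_left hq (nonneg_of_mul_nonneg_left (by linarith) ha)
  have hKnq : K < n * q := by linarith
  have hmain : e * (n * q) ≤ (n * q - K) ^ 2 :=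
    mul_le_sq_sub_of_le (by linarith) hnq (by linear_combination hquad)
  refine ⟨hKnq, ?_⟩
  rw [div_le_div_iff₀ (pow_pos (sub_pos.2 hKnq) 2) (by positivity)]
  calc n * q * p * (4 * K) = β * (e * (n * q)) := by rw [he]; field_simp
    _ ≤ β * (n * q - K) ^ 2 := by gcongr

/-- Lemma 7, part 2: for `n` at least the explicit threshold `n'`, a binomial
random variable `X ~ B(n, 1 - p_L)` satisfies `P(Y < K) ≤ β/(4K)`. -/
theorem stmt_13 {Ω : Type*} [MeasurableSpace Ω] (μ : Measure Ω) [IsProbabilityMeasure μ]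
    (p_L p_H β : ℝ) (hpL0 : 0 < p_L) (hpLH : p_L < p_H) (hpH1 : p_H < 1) (hβ : 0 < β)
    (K : ℕ) (hK : 0 < K)
    (n : ℕ)
    (hn : ((1 - p_H) * (2 * K + 4 * K * p_H / β) +
        Real.sqrt (((1 - p_H) * (2 * K + 4 * K * p_H / β)) ^ 2 -
          4 * (1 - p_H) ^ 2 * (K : ℝ) ^ 2)) / (2 * (1 - p_H) ^ 2) ≤ (n : ℝ))
    (t : Fin n → Ω → ℝ)
    (hmeas : ∀ i, Measurable (t i))
    (h01 : ∀ i ω, t i ω = 0 ∨ t i ω = 1)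
    (hbern : ∀ i, μ {ω | t i ω = 1} = ENNReal.ofReal (1 - p_L))
    (hind : iIndepFun t μ) :
    μ {ω | (∑ i, t i ω) < (K : ℝ)} ≤ ENNReal.ofReal (β / (4 * K)) := by
  obtain ⟨hKn, hbound⟩ := lt_mul_and_div_sq_le_of_threshold_le (hpL0.trans hpLH) hpH1 hβ
    (Nat.cast_pos.2 hK) (by linarith : 1 - p_H ≤ 1 - p_L) hn
  have hq : ∀ i, μ.real {ω | t i ω = 1} = 1 - p_L := fun i => by
    rw [measureReal_def, hbern i, ENNReal.toReal_ofReal (by linarith)]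
  refine (meas_sum_lt_le_of_zero_one hmeas h01 hq (fun i j hij => hind.indepFun hij)
    (by simpa using hKn)).trans (ENNReal.ofReal_le_ofReal ?_)
  rw [Fintype.card_fin, sub_sub_cancel]
  refine le_trans ?_ hbound
  gcongr
  exact mul_nonneg n.cast_nonneg (by linarith)
end

section
/- Let (Ω, P) be a probability space, let t be a random variable with 0 ≤ t ≤ 1 almost surely, let η ≥ 0 and b be real numbers, and let Y, D, A be events with P(Y ∩ A) > 0 and P(D ∩ A) > 0. Assume: (i) E(t | Y ∩ A) = E(t | D ∩ A); (ii) P(A | Y) ≥ 1 − η; (iii) P(A | D) ≥ 1 − η; and (iv) E(t | D) ≤ b. Then E(t | Y) ≤ b + 2η. -/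
/-!
For a `[0, 1]`-valued `t` and an event `A` of conditional probability at least `1 - η`
given `S`, conditioning additionally on `A` moves the conditional expectation of `t` by at
most `η`: writing `E(t | S) = p E(t | S ∩ A) + (1 - p) E(t | S \ A)` with `p = P(A | S)`, the
difference is `(1 - p)` times a difference of two numbers in `[0, 1]`. Applying this once to
`D` and once to `Y` gives `E(t | Y) ≤ E(t | Y ∩ A) + η = E(t | D ∩ A) + η ≤ E(t | D) + 2η`.
-/

open MeasureTheory ProbabilityTheory

section

variable {Ω : Type*} [MeasurableSpace Ω] {t : Ω → ℝ} {A S : Set Ω}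

lemma setIntegral_mem_Icc_of_mem_Icc {ν : Measure Ω} [IsFiniteMeasure ν] (ht : Integrable t ν)
    (h01 : ∀ᵐ ω ∂ν, t ω ∈ Set.Icc 0 1) :
    ∫ ω in A, t ω ∂ν ∈ Set.Icc 0 (ν.real A) := by
  refine ⟨integral_nonneg_of_ae (ae_restrict_of_ae (h01.mono fun ω h ↦ h.1)), ?_⟩
  calc ∫ ω in A, t ω ∂ν ≤ ∫ _ in A, (1 : ℝ) ∂ν :=
        setIntegral_mono_ae ht.integrableOn (integrableOn_const (by finiteness))
          (h01.mono fun ω h ↦ h.2)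
    _ = ν.real A := by simp

lemma integral_cond_eq_inv_mul_setIntegral (ν : Measure Ω) :
    ∫ ω, t ω ∂ν[|A] = (ν.real A)⁻¹ * ∫ ω in A, t ω ∂ν := by
  rw [ProbabilityTheory.cond, integral_smul_measure, ENNReal.toReal_inv, smul_eq_mul,
    measureReal_def]

lemma abs_integral_sub_integral_cond_le {ν : Measure Ω} [IsProbabilityMeasure ν]
    (ht : AEStronglyMeasurable t ν) (h01 : ∀ᵐ ω ∂ν, t ω ∈ Set.Icc 0 1)
    (hA : MeasurableSet A) (hA0 : ν A ≠ 0) :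
    |∫ ω, t ω ∂ν - ∫ ω, t ω ∂ν[|A]| ≤ ν.real Aᶜ := by
  have hint : Integrable t ν := .of_bound ht 1 <| h01.mono fun ω h ↦ by
    rw [Real.norm_eq_abs, abs_le]; constructor <;> linarith [h.1, h.2]
  obtain ⟨ha0, ha1⟩ := setIntegral_mem_Icc_of_mem_Icc (A := A) hint h01
  obtain ⟨hc0, hc1⟩ := setIntegral_mem_Icc_of_mem_Icc (A := Aᶜ) hint h01
  have hp : 0 < ν.real A := ENNReal.toReal_pos hA0 (measure_ne_top ν A)
  have hpq : ν.real A + ν.real Aᶜ = 1 := by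
    rw [measureReal_add_measureReal_compl hA, probReal_univ]
  rw [integral_cond_eq_inv_mul_setIntegral, ← integral_add_compl hA hint]
  set r := (ν.real A)⁻¹ * ∫ ω in A, t ω ∂ν
  have hr : r ∈ Set.Icc 0 1 := ⟨by positivity, inv_mul_le_one_of_le₀ ha1 hp.le⟩
  have har : ∫ ω in A, t ω ∂ν = ν.real A * r := by simp only [r]; field_simp
  -- the difference is `∫ in Aᶜ, t - ν.real Aᶜ * r`, both terms lying in `[0, ν.real Aᶜ]`
  rw [abs_le]
  constructor <;> nlinarith [hr.1, hr.2]

lemma measureReal_compl_le_of_ofReal_one_sub_le {ν : Measure Ω} [IsProbabilityMeasure ν]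
    {η : ℝ} (hA : MeasurableSet A) (h : ENNReal.ofReal (1 - η) ≤ ν A) : ν.real Aᶜ ≤ η := by
  have := (ENNReal.ofReal_le_iff_le_toReal (measure_ne_top ν A)).1 h
  rw [probReal_compl_eq_one_sub hA, measureReal_def]
  linarith

lemma abs_integral_cond_sub_integral_cond_inter_le {μ : Measure Ω} [IsFiniteMeasure μ] {η : ℝ}
    (ht : AEStronglyMeasurable t μ) (h01 : ∀ᵐ ω ∂μ, t ω ∈ Set.Icc 0 1)
    (hS : MeasurableSet S) (hA : MeasurableSet A) (hSA : μ (S ∩ A) ≠ 0)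
    (hAS : ENNReal.ofReal (1 - η) ≤ μ[A | S]) :
    |∫ ω, t ω ∂μ[|S] - ∫ ω, t ω ∂μ[|S ∩ A]| ≤ η := by
  have : IsProbabilityMeasure μ[|S] :=
    cond_isProbabilityMeasure (measure_mono_null Set.inter_subset_left |>.mt hSA)
  rw [← cond_cond_eq_cond_inter hS hA]
  exact (abs_integral_sub_integral_cond_le (ht.mono_ac cond_absolutelyContinuous)
    (cond_absolutelyContinuous.ae_le h01) hA (cond_pos_of_inter_ne_zero hS hSA).ne').trans
    (measureReal_compl_le_of_ofReal_one_sub_le hA hAS)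

end

theorem stmt_15_general {Ω : Type*} [MeasurableSpace Ω] (μ : Measure Ω) [IsProbabilityMeasure μ]
    (t : Ω → ℝ) (hmeas : Measurable t)
    (h01 : ∀ᵐ ω ∂μ, 0 ≤ t ω ∧ t ω ≤ 1)
    (η b : ℝ)
    (Y D A : Set Ω) (hYm : MeasurableSet Y) (hDm : MeasurableSet D) (hAm : MeasurableSet A)
    (hYA : 0 < μ (Y ∩ A)) (hDA : 0 < μ (D ∩ A))
    (hEq : ∫ ω, t ω ∂(μ[|Y ∩ A]) = ∫ ω, t ω ∂(μ[|D ∩ A]))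
    (hAY : ENNReal.ofReal (1 - η) ≤ μ[A | Y])
    (hAD : ENNReal.ofReal (1 - η) ≤ μ[A | D])
    (hDb : ∫ ω, t ω ∂(μ[|D]) ≤ b) :
    ∫ ω, t ω ∂(μ[|Y]) ≤ b + 2 * η := by
  have hY := abs_integral_cond_sub_integral_cond_inter_le hmeas.aestronglyMeasurable h01
    hYm hAm hYA.ne' hAY
  have hD := abs_integral_cond_sub_integral_cond_inter_le hmeas.aestronglyMeasurable h01
    hDm hAm hDA.ne' hAD
  linarith [(abs_le.1 hY).2, (abs_le.1 hD).1]

/-- Abstract content of Lemma 8, part 1: if conditioning on the success event `A`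
equalizes the expectations given `Y` and given `D`, and `A` has conditional
probability at least `1 - η` both given `Y` and given `D`, then
`E(t | D) ≤ b` implies `E(t | Y) ≤ b + 2η`. -/
theorem stmt_15 {Ω : Type*} [MeasurableSpace Ω] (μ : Measure Ω) [IsProbabilityMeasure μ]
    (t : Ω → ℝ) (hmeas : Measurable t)
    (h01 : ∀ᵐ ω ∂μ, 0 ≤ t ω ∧ t ω ≤ 1)
    (η b : ℝ) (hη : 0 ≤ η)
    (Y D A : Set Ω) (hYm : MeasurableSet Y) (hDm : MeasurableSet D) (hAm : MeasurableSet A)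
    (hYA : 0 < μ (Y ∩ A)) (hDA : 0 < μ (D ∩ A))
    (hEq : ∫ ω, t ω ∂(μ[|Y ∩ A]) = ∫ ω, t ω ∂(μ[|D ∩ A]))
    (hAY : ENNReal.ofReal (1 - η) ≤ μ[A | Y])
    (hAD : ENNReal.ofReal (1 - η) ≤ μ[A | D])
    (hDb : ∫ ω, t ω ∂(μ[|D]) ≤ b) :
    ∫ ω, t ω ∂(μ[|Y]) ≤ b + 2 * η :=
  stmt_15_general μ t hmeas h01 η b Y D A hYm hDm hAm hYA hDA hEq hAY hAD hDb
end
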